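/- Let q ≥ 2 and n ≥ 1 be integers and let Φ_n be the spherical function. Then for every λ ∈ [−2√q, 2√q], |Φ_n'(λ)| ≤ (n² q^{−n/2} / (2√q (q+1))) · (2 + (n+1)(q−1)). -/

import Mathlib

/-!
`Φ_n'(λ)` is `q^{-n/2} / (2√q)` times a combination, with nonnegative coefficients, of
`T_n'` and `U_n'` at `λ / (2√q) ∈ [-1, 1]`. There `|T_n'|` is dominated by `T_n'(1) = n²`, and
since `U_{n+2} = 2 T_{n+2} + U_n`, also `|U_n'|` is dominated by `U_n'(1) = n(n+1)(n+2)/3`,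
which is at most `(n+1) n²`.
-/

open Set Real

/-- The spherical function of the `(q+1)`-regular tree:
`Φ_n(λ) = q^{−n/2}( (2/(q+1)) T_n(λ/(2√q)) + ((q−1)/(q+1)) U_n(λ/(2√q)) )`. -/
noncomputable def Phi (q n : ℕ) (l : ℝ) : ℝ :=
  (q:ℝ) ^ (-(n:ℝ)/2) *
    ((2/((q:ℝ)+1)) * (Polynomial.Chebyshev.T ℝ (n:ℤ)).eval (l/(2*Real.sqrt q))
      + (((q:ℝ)-1)/((q:ℝ)+1)) * (Polynomial.Chebyshev.U ℝ (n:ℤ)).eval (l/(2*Real.sqrt q)))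

open Polynomial

namespace Polynomial.Chebyshev

variable {x : ℝ}

theorem abs_eval_derivative_T_real_le (n : ℤ) (hx : |x| ≤ 1) :
    |(derivative (T ℝ n)).eval x| ≤ (n : ℝ) ^ 2 := by
  simpa [derivative_T_eval_one] using abs_iterate_derivative_T_real_le n 1 hx

theorem abs_eval_derivative_U_real_le_eval_one (n : ℕ) (hx : |x| ≤ 1) :
    |(derivative (U ℝ n)).eval x| ≤ (derivative (U ℝ n)).eval 1 := by
  induction n using Nat.twoStepInduction with
  | zero => simp
  | one => simp [derivative_mul]
  | more n ih _ =>
    have hT : |(derivative (T ℝ (n + 2))).eval x| ≤ (derivative (T ℝ (n + 2))).eval 1 :=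
      abs_iterate_derivative_T_real_le (n + 2) 1 hx
    push_cast
    simp only [U_eq_two_mul_T_add_U, derivative_add, derivative_mul, derivative_ofNat, zero_mul,
      zero_add, eval_add, eval_mul, eval_ofNat]
    refine (abs_add_le _ _).trans ?_
    rw [abs_mul, abs_two]
    gcongr

theorem abs_eval_derivative_U_real_le (n : ℕ) (hx : |x| ≤ 1) :
    |(derivative (U ℝ n)).eval x| ≤ (n + 1) * (n : ℝ) ^ 2 := by
  refine (abs_eval_derivative_U_real_le_eval_one n hx).trans ?_
  rw [derivative_U_eval_one_eq_div]
  push_cast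
  have hn : (0 : ℝ) ≤ (n + 1) * n * (n - 1) := by
    rcases n with _ | n
    · simp
    · push_cast; ring_nf; positivity
  linarith

end Polynomial.Chebyshev

open Polynomial.Chebyshev

theorem Polynomial.hasDerivAt_eval_div_const (P : ℝ[X]) (s t : ℝ) :
    HasDerivAt (fun l => P.eval (l / s)) ((derivative P).eval (t / s) / s) t := by
  simpa [div_eq_mul_inv, Function.comp_def] using
    (P.hasDerivAt (t / s)).comp t ((hasDerivAt_id t).div_const s)

theorem hasDerivAt_Phi (q n : ℕ) (l : ℝ) :
    HasDerivAt (Phi q n)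
      ((q : ℝ) ^ (-(n : ℝ) / 2) / (2 * √q) *
        (2 / (q + 1) * (derivative (T ℝ n)).eval (l / (2 * √q))
          + (q - 1) / (q + 1) * (derivative (U ℝ n)).eval (l / (2 * √q)))) l := by
  have hT := (T ℝ n).hasDerivAt_eval_div_const (2 * √q) l
  have hU := (U ℝ n).hasDerivAt_eval_div_const (2 * √q) l
  exact (((hT.const_mul (2 / ((q : ℝ) + 1))).add (hU.const_mul (((q : ℝ) - 1) / (q + 1)))).const_mul
    ((q : ℝ) ^ (-(n : ℝ) / 2))).congr_deriv (by ring)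

theorem Phi_deriv_bound_general (q n : ℕ) (hq : 2 ≤ q) :
    ∀ l ∈ Icc (-(2*Real.sqrt q)) (2*Real.sqrt q),
      |deriv (Phi q n) l| ≤
        (n:ℝ)^2 * (q:ℝ) ^ (-(n:ℝ)/2) / (2*Real.sqrt q * ((q:ℝ)+1)) *
          (2 + ((n:ℝ)+1)*((q:ℝ)-1)) := by
  intro l hl
  have hq1 : (1 : ℝ) ≤ q := by exact_mod_cast one_le_two.trans hq
  have hs : 0 < 2 * √q := by positivity
  have hx : |l / (2 * √q)| ≤ 1 := by
    rw [abs_div, abs_of_pos hs, div_le_one hs]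
    exact abs_le.2 hl
  have hcomb : |2 / (q + 1) * (derivative (T ℝ n)).eval (l / (2 * √q))
      + (q - 1) / (q + 1) * (derivative (U ℝ n)).eval (l / (2 * √q))|
      ≤ 2 / (q + 1) * (n : ℝ) ^ 2 + (q - 1) / (q + 1) * ((n + 1) * (n : ℝ) ^ 2) := by
    refine (abs_add_le _ _).trans ?_
    have hb : 0 ≤ ((q : ℝ) - 1) / (q + 1) := div_nonneg (by linarith) (by positivity)
    rw [abs_mul, abs_mul, abs_of_nonneg (by positivity : 0 ≤ 2 / ((q : ℝ) + 1)), abs_of_nonneg hb]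
    gcongr
    · exact abs_eval_derivative_T_real_le n hx
    · exact abs_eval_derivative_U_real_le n hx
  rw [(hasDerivAt_Phi q n l).deriv, abs_mul, abs_of_nonneg (by positivity)]
  calc _ ≤ (q : ℝ) ^ (-(n : ℝ) / 2) / (2 * √q) *
        (2 / (q + 1) * (n : ℝ) ^ 2 + (q - 1) / (q + 1) * ((n + 1) * (n : ℝ) ^ 2)) := by
        gcongr
    _ = _ := by field_simp

/-- For `q ≥ 2`, `n ≥ 1` and `λ ∈ [−2√q, 2√q]`,
`|Φ_n'(λ)| ≤ (n² q^{−n/2} / (2√q (q+1))) (2 + (n+1)(q−1))`. -/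
theorem Phi_deriv_bound (q n : ℕ) (hq : 2 ≤ q) (hn : 1 ≤ n) :
    ∀ l ∈ Icc (-(2*Real.sqrt q)) (2*Real.sqrt q),
      |deriv (Phi q n) l| ≤
        (n:ℝ)^2 * (q:ℝ) ^ (-(n:ℝ)/2) / (2*Real.sqrt q * ((q:ℝ)+1)) *
          (2 + ((n:ℝ)+1)*((q:ℝ)-1)) :=
  Phi_deriv_bound_general q n hq
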